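/- In a weighted tree (T,w) with non-negative integer weights and total weight n > 0, the set of centroids induces a path in T. -/
import Mathlib


open SimpleGraph
open scoped Classical

/-- Weight of the connected component of `u` in `T - v`: total weight of all vertices
reachable from `u` by a walk avoiding `v`. -/
noncomputable def compWeight {V : Type*} [Fintype V] (T : SimpleGraph V) (w : V → ℕ)
    (v u : V) : ℕ :=
  ∑ y : V, if ∃ p : T.Walk u y, v ∉ p.support then w y else 0

/-- The heaviest subtree weight of `v`: maximum weight of a connected component of `T - v`. -/
noncomputable def hs {V : Type*} [Fintype V] (T : SimpleGraph V) (w : V → ℕ) (v : V) : ℕ :=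
  Finset.univ.sup fun u => compWeight T w v u

/-- A centroid is a vertex minimizing the heaviest subtree weight. -/
def IsCentroid {V : Type*} [Fintype V] (T : SimpleGraph V) (w : V → ℕ) (v : V) : Prop :=
  ∀ u, hs T w v ≤ hs T w u

section Aux

set_option linter.unusedSectionVars false

variable {V : Type*} [Fintype V] {T : SimpleGraph V} {w : V → ℕ}

/-- `z` is reachable from `a` by a walk avoiding `v`. -/
def Reach (T : SimpleGraph V) (v a b : V) : Prop := ∃ p : T.Walk a b, v ∉ p.support

lemma reach_symm {v a b : V} (h : Reach T v a b) : Reach T v b a := by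
  obtain ⟨p, hp⟩ := h
  exact ⟨p.reverse, by simpa [SimpleGraph.Walk.support_reverse] using hp⟩

lemma reach_trans {v a b c : V} (h1 : Reach T v a b) (h2 : Reach T v b c) : Reach T v a c := by
  obtain ⟨p, hp⟩ := h1; obtain ⟨q, hq⟩ := h2
  refine ⟨p.append q, ?_⟩
  rw [SimpleGraph.Walk.mem_support_append_iff]
  tauto

lemma reach_self {v a : V} (h : a ≠ v) : Reach T v a a :=
  ⟨SimpleGraph.Walk.nil, by simp [Ne.symm h]⟩

lemma reach_of_mem {v a b x : V} (p : T.Walk a b) (hp : v ∉ p.support) (hx : x ∈ p.support) :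
    Reach T v a x :=
  ⟨p.takeUntil x hx, fun h => hp (p.support_takeUntil_subset hx h)⟩

lemma compWeight_def (v u : V) :
    compWeight T w v u = ∑ y : V, if Reach T v u y then w y else 0 := rfl

lemma compWeight_eq_of_reach {v a b : V} (h : Reach T v a b) :
    compWeight T w v a = compWeight T w v b := by
  rw [compWeight_def, compWeight_def]
  refine Finset.sum_congr rfl fun z _ => ?_
  congr 1
  rw [eq_iff_iff]
  exact ⟨fun h' => reach_trans (reach_symm h) h', fun h' => reach_trans h h'⟩

lemma compWeight_le_of_not_reach {x y v : V} (h : ¬ Reach T x y v) :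
    compWeight T w x y ≤ compWeight T w v y := by
  rw [compWeight_def, compWeight_def]
  refine Finset.sum_le_sum fun z _ => ?_
  by_cases hr : Reach T x y z
  · obtain ⟨p, hp⟩ := hr
    have hv : v ∉ p.support := fun hv => h (reach_of_mem p hp hv)
    rw [if_pos ⟨p, hp⟩, if_pos ⟨p, hv⟩]
  · rw [if_neg hr]
    exact Nat.zero_le _

lemma compWeight_self (v : V) : compWeight T w v v = 0 := by
  rw [compWeight_def]
  refine Finset.sum_eq_zero fun z _ => ?_
  rw [if_neg]
  rintro ⟨p, hp⟩
  exact hp p.start_mem_support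

lemma compWeight_le_hs (v u : V) : compWeight T w v u ≤ hs T w v :=
  Finset.le_sup (Finset.mem_univ u)

lemma exists_eq_hs (hne : (Finset.univ : Finset V).Nonempty) (v : V) :
    ∃ a, hs T w v = compWeight T w v a := by
  obtain ⟨a, _, ha⟩ := Finset.exists_mem_eq_sup Finset.univ hne (fun u => compWeight T w v u)
  exact ⟨a, ha⟩

lemma path_eq (hT : T.IsTree) {u v : V} {p q : T.Walk u v} (hp : p.IsPath) (hq : q.IsPath) :
    p = q := by
  obtain ⟨r, _, hr⟩ := hT.existsUnique_path u v
  rw [hr p hp, hr q hq]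

lemma not_reach_of_mem_path (hT : T.IsTree) {u v x : V} {p : T.Walk u v} (hp : p.IsPath)
    (hx : x ∈ p.support) : ¬ Reach T x u v := by
  rintro ⟨q, hq⟩
  have h1 : q.bypass = p := path_eq hT q.bypass_isPath hp
  have h2 : x ∈ q.bypass.support := h1 ▸ hx
  exact hq (q.support_bypass_subset h2)

lemma edge_sum (hT : T.IsTree) {u v : V} (h : T.Adj u v) :
    compWeight T w u v + compWeight T w v u = ∑ z, w z := by
  rw [compWeight_def, compWeight_def, ← Finset.sum_add_distrib]
  refine Finset.sum_congr rfl fun z _ => ?_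
  by_cases h1 : Reach T u v z
  · rw [if_pos h1, if_neg, add_zero]
    rintro ⟨q, hq⟩
    obtain ⟨p, hp⟩ := h1
    have hpb : u ∉ p.bypass.support := fun hh => hp (p.support_bypass_subset hh)
    have hR : (SimpleGraph.Walk.cons h p.bypass).IsPath := p.bypass_isPath.cons hpb
    have heq : SimpleGraph.Walk.cons h p.bypass = q.bypass := path_eq hT hR q.bypass_isPath
    have hv1 : v ∈ (SimpleGraph.Walk.cons h p.bypass).support := by
      rw [SimpleGraph.Walk.support_cons]
      exact List.mem_cons_of_mem _ p.bypass.start_mem_support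
    rw [heq] at hv1
    exact hq (q.support_bypass_subset hv1)
  · rw [if_neg h1, zero_add, if_pos]
    obtain ⟨W0⟩ := hT.isConnected.preconnected v z
    set W := W0.bypass with hWdef
    have hWp : W.IsPath := W0.bypass_isPath
    have hu : u ∈ W.support := by
      by_contra huW
      exact h1 ⟨W, huW⟩
    refine ⟨W.dropUntil u hu, ?_⟩
    intro hvd
    have hnd := hWp.support_nodup
    rw [← W.take_spec hu, SimpleGraph.Walk.support_append] at hnd
    have hdisj := List.disjoint_of_nodup_append hnd
    have hv1 : v ∈ (W.takeUntil u hu).support := SimpleGraph.Walk.start_mem_support _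
    have hv2 : v ∈ (W.dropUntil u hu).support.tail := by
      rw [SimpleGraph.Walk.support_eq_cons (W.dropUntil u hu)] at hvd
      rcases List.mem_cons.mp hvd with h' | h'
      · exact absurd h' h.ne'
      · exact h'
    exact hdisj hv1 hv2


lemma exists_adj_rep (hT : T.IsTree) {c y : V} (h0 : 0 < compWeight T w c y) :
    ∃ a, T.Adj c a ∧ Reach T c a y := by
  have hcy : c ≠ y := by
    rintro rfl
    rw [compWeight_self] at h0
    omega
  obtain ⟨W0⟩ := hT.isConnected.preconnected c y
  have hWp := W0.bypass_isPath
  have hnn : ¬ W0.bypass.Nil := Walk.not_nil_of_ne hcy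
  obtain ⟨a, ha, q, hq⟩ := Walk.not_nil_iff.mp hnn
  have hqp : (Walk.cons ha q).IsPath := hq ▸ hWp
  rw [Walk.cons_isPath_iff] at hqp
  exact ⟨a, ha, q, hqp.2⟩

lemma descend (hT : T.IsTree) (hw : 0 < ∑ z, w z) :
    ∀ (k : ℕ) (c a : V), IsCentroid T w c → T.Adj c a → compWeight T w c a = hs T w c →
      (Finset.univ.filter fun z => Reach T c a z).card ≤ k → 2 * hs T w c ≤ ∑ z, w z := by
  have hVne : (Finset.univ : Finset V).Nonempty := by
    rcases Finset.univ.eq_empty_or_nonempty (α := V) with h | h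
    · rw [show (∑ v, w v) = 0 by rw [h, Finset.sum_empty]] at hw; omega
    · exact h
  intro k
  induction k with
  | zero =>
    intro c a _ hadj _ hcard
    exfalso
    have haa : a ∈ Finset.univ.filter fun z => Reach T c a z := by
      simp only [Finset.mem_filter, Finset.mem_univ, true_and]
      exact reach_self hadj.ne'
    have := Finset.card_pos.mpr ⟨a, haa⟩
    omega
  | succ k ih =>
    intro c a hc hadj hca hcard
    by_contra hlt
    push_neg at hlt
    have hedge : compWeight T w c a + compWeight T w a c = ∑ z, w z := edge_sum hT hadj
    have hma : hs T w c ≤ hs T w a := hc a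
    obtain ⟨y, hy⟩ := exists_eq_hs hVne a
    by_cases hyc : Reach T a y c
    · have h1 : compWeight T w a y = compWeight T w a c := compWeight_eq_of_reach hyc
      rw [h1] at hy
      rw [hy] at hma
      omega
    · have hcm : 0 < hs T w c := by omega
      have hya : y ≠ a := by
        rintro rfl
        rw [compWeight_self] at hy
        omega
      have hyne : y ≠ c := by
        rintro rfl
        exact hyc (reach_self hadj.ne)
      obtain ⟨W0⟩ := hT.isConnected.preconnected y c
      set W := W0.bypass with hWdef
      have hWp : W.IsPath := W0.bypass_isPath
      have haW : a ∈ W.support := by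
        by_contra hh
        exact hyc ⟨W, hh⟩
      have hreach_ya : Reach T c y a := by
        refine ⟨W.takeUntil a haW, ?_⟩
        intro hcs
        have hnd := hWp.support_nodup
        rw [← W.take_spec haW, Walk.support_append] at hnd
        have hdisj := List.disjoint_of_nodup_append hnd
        have hc2 : c ∈ (W.dropUntil a haW).support.tail := by
          have hce : c ∈ (W.dropUntil a haW).support := Walk.end_mem_support _
          rw [Walk.support_eq_cons (W.dropUntil a haW)] at hce
          rcases List.mem_cons.mp hce with h' | h'
          · exact absurd h' hadj.ne
          · exact h'
        exact hdisj hcs hc2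
      have hcy_eq : compWeight T w c y = hs T w c := by
        rw [← hca]
        exact (compWeight_eq_of_reach (reach_symm hreach_ya)).symm
      have hreach_yz_c : ∀ z, Reach T a y z → Reach T c y z := by
        intro z hz
        obtain ⟨p, hp⟩ := hz
        refine ⟨p, fun hcp => hyc (reach_of_mem p hp hcp)⟩
      have hkey : compWeight T w a y + w a ≤ compWeight T w c y := by
        have hsum : ∀ z : V, (if Reach T a y z then w z else 0) + (if z = a then w z else 0)
            ≤ (if Reach T c y z then w z else 0) := by
          intro z
          by_cases hz : z = a
          · subst hz
            rw [if_pos rfl, if_neg, zero_add, if_pos hreach_ya]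
            rintro ⟨p, hp⟩
            exact hp p.end_mem_support
          · rw [if_neg hz, add_zero]
            by_cases hr : Reach T a y z
            · rw [if_pos hr, if_pos (hreach_yz_c z hr)]
            · rw [if_neg hr]
              exact Nat.zero_le _
        calc compWeight T w a y + w a
            = ∑ z, ((if Reach T a y z then w z else 0) + (if z = a then w z else 0)) := by
              rw [Finset.sum_add_distrib, ← compWeight_def]
              congr 1
              simp
          _ ≤ ∑ z, (if Reach T c y z then w z else 0) := Finset.sum_le_sum fun z _ => hsum z
          _ = compWeight T w c y := (compWeight_def _ _).symm
      rw [hcy_eq] at hkey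
      rw [← hy] at hkey
      have hwa : w a = 0 := by omega
      have hsa : hs T w a = hs T w c := by omega
      have hca2 : IsCentroid T w a := fun u => by rw [hsa]; exact hc u
      have h0 : 0 < compWeight T w a y := by omega
      obtain ⟨a', hadj', hra'⟩ := exists_adj_rep hT h0
      have hcaa' : compWeight T w a a' = hs T w a := by
        rw [hy]
        exact compWeight_eq_of_reach hra'
      have hmono : (Finset.univ.filter fun z => Reach T a a' z)
          ⊆ (Finset.univ.filter fun z => Reach T c a z).erase a := by
        intro z hz
        simp only [Finset.mem_filter, Finset.mem_univ, true_and] at hz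
        have hz_ne : z ≠ a := by
          rintro rfl
          obtain ⟨p, hp⟩ := hz
          exact hp p.end_mem_support
        have h7 : Reach T a y z := reach_trans (reach_symm hra') hz
        have h8 : Reach T c y z := hreach_yz_c z h7
        have h9 : Reach T c a z := reach_trans (reach_symm hreach_ya) h8
        refine Finset.mem_erase.mpr ⟨hz_ne, ?_⟩
        simp only [Finset.mem_filter, Finset.mem_univ, true_and]
        exact h9
      have hmem : a ∈ Finset.univ.filter fun z => Reach T c a z := by
        simp only [Finset.mem_filter, Finset.mem_univ, true_and]
        exact reach_self hadj.ne'
      have hcard' : (Finset.univ.filter fun z => Reach T a a' z).card ≤ k := by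
        have h10 := Finset.card_le_card hmono
        have h11 := Finset.card_erase_of_mem hmem
        have h12 := Finset.card_pos.mpr ⟨a, hmem⟩
        omega
      have hfin := ih a a' hca2 hadj' hcaa' hcard'
      rw [hsa] at hfin
      omega

lemma two_hs_le (hT : T.IsTree) (hw : 0 < ∑ z, w z) {c : V} (hc : IsCentroid T w c) :
    2 * hs T w c ≤ ∑ z, w z := by
  by_cases h0 : hs T w c = 0
  · omega
  · have hVne : (Finset.univ : Finset V).Nonempty := by
      rcases Finset.univ.eq_empty_or_nonempty (α := V) with h | h
      · rw [show (∑ v, w v) = 0 by rw [h, Finset.sum_empty]] at hw; omega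
      · exact h
    obtain ⟨y, hy⟩ := exists_eq_hs hVne c
    have h0' : 0 < compWeight T w c y := by rw [← hy]; omega
    obtain ⟨a, hadj, hra⟩ := exists_adj_rep hT h0'
    have hca : compWeight T w c a = hs T w c := by
      rw [hy]
      exact compWeight_eq_of_reach hra
    exact descend hT hw _ c a hc hadj hca le_rfl

lemma centroid_convex (hT : T.IsTree) {u v x : V} (hu : IsCentroid T w u) (hv : IsCentroid T w v)
    {P : T.Walk u v} (hP : P.IsPath) (hx : x ∈ P.support) : IsCentroid T w x := by
  by_cases hxu : x = u
  · exact hxu ▸ hu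
  by_cases hxv : x = v
  · exact hxv ▸ hv
  intro t
  have hbound : hs T w x ≤ hs T w u := by
    have hdef : hs T w x = Finset.univ.sup fun y => compWeight T w x y := rfl
    rw [hdef]
    refine Finset.sup_le fun y _ => ?_
    by_cases h1 : Reach T x y u
    · have h2 : ¬ Reach T x y v := by
        intro h2
        exact not_reach_of_mem_path hT hP hx (reach_trans (reach_symm h1) h2)
      calc compWeight T w x y ≤ compWeight T w v y := compWeight_le_of_not_reach h2
        _ ≤ hs T w v := compWeight_le_hs v y
        _ ≤ hs T w u := hv u
    · calc compWeight T w x y ≤ compWeight T w u y := compWeight_le_of_not_reach h1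
        _ ≤ hs T w u := compWeight_le_hs u y
  exact hbound.trans (hu t)

lemma no_three (hT : T.IsTree) (hw : 0 < ∑ z, w z) {x a b d : V}
    (hx : IsCentroid T w x) (ha : IsCentroid T w a) (hb : IsCentroid T w b) (hd : IsCentroid T w d)
    (hab : a ≠ b) (had : a ≠ d) (hbd : b ≠ d)
    (h1 : T.Adj x a) (h2 : T.Adj x b) (h3 : T.Adj x d) : False := by
  have e1 := edge_sum (w := w) hT h1
  have e2 := edge_sum (w := w) hT h2
  have e3 := edge_sum (w := w) hT h3
  have u1 : compWeight T w a x ≤ hs T w x := (compWeight_le_hs (w := w) a x).trans (ha x)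
  have u2 : compWeight T w b x ≤ hs T w x := (compWeight_le_hs (w := w) b x).trans (hb x)
  have u3 : compWeight T w d x ≤ hs T w x := (compWeight_le_hs (w := w) d x).trans (hd x)
  have disj : ∀ {p q : V} {z : V}, p ≠ q → T.Adj x p → T.Adj x q →
      Reach T x p z → Reach T x q z → False := by
    intro p q z hpq hxp hxq hp hq
    have hr : Reach T x p q := reach_trans hp (reach_symm hq)
    have hpath : (Walk.cons hxp.symm (Walk.cons hxq Walk.nil)).IsPath := by
      rw [Walk.cons_isPath_iff, Walk.cons_isPath_iff]
      refine ⟨⟨Walk.IsPath.nil, by simp [hxq.ne]⟩, ?_⟩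
      simp only [Walk.support_cons, Walk.support_nil, List.mem_cons, List.mem_singleton]
      push_neg
      exact ⟨hxp.ne', hpq, by simp⟩
    refine not_reach_of_mem_path hT hpath ?_ hr
    simp [Walk.support_cons]
  have key : compWeight T w x a + compWeight T w x b + compWeight T w x d ≤ ∑ z, w z := by
    have hpt : ∀ z : V, (if Reach T x a z then w z else 0) + (if Reach T x b z then w z else 0)
        + (if Reach T x d z then w z else 0) ≤ w z := by
      intro z
      by_cases za : Reach T x a z
      · by_cases zb : Reach T x b z
        · exact (disj hab h1 h2 za zb).elim
        · by_cases zd : Reach T x d z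
          · exact (disj had h1 h3 za zd).elim
          · simp [za, zb, zd]
      · by_cases zb : Reach T x b z
        · by_cases zd : Reach T x d z
          · exact (disj hbd h2 h3 zb zd).elim
          · simp [za, zb, zd]
        · by_cases zd : Reach T x d z <;> simp [za, zb, zd]
    calc compWeight T w x a + compWeight T w x b + compWeight T w x d
        = ∑ z, ((if Reach T x a z then w z else 0) + (if Reach T x b z then w z else 0)
            + (if Reach T x d z then w z else 0)) := by
          rw [compWeight_def, compWeight_def, compWeight_def, ← Finset.sum_add_distrib,
            ← Finset.sum_add_distrib]
      _ ≤ ∑ z, w z := Finset.sum_le_sum fun z _ => hpt z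
  have h2m := two_hs_le hT hw hx
  omega

lemma first_meet {Q : V → Prop} {s t : V} (W : T.Walk s t) (hv : Q t) :
    ∃ (x : V) (W' : T.Walk s x), Q x ∧ (∀ y ∈ W'.support, y ≠ x → ¬ Q y)
      ∧ W'.support ⊆ W.support := by
  induction W with
  | nil =>
    refine ⟨_, Walk.nil, hv, ?_, by simp⟩
    intro y hy hne
    simp only [Walk.support_nil, List.mem_singleton] at hy
    exact absurd hy hne
  | @cons c c' t' h q ih =>
    by_cases hu : Q c
    · refine ⟨c, Walk.nil, hu, ?_, by simp⟩
      intro y hy hne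
      simp only [Walk.support_nil, List.mem_singleton] at hy
      exact absurd hy hne
    · obtain ⟨x, W', hxq, hW', hsub⟩ := ih hv
      refine ⟨x, Walk.cons h W', hxq, ?_, ?_⟩
      · intro y hy hne
        rw [Walk.support_cons] at hy
        rcases List.mem_cons.mp hy with rfl | hy'
        · exact hu
        · exact hW' y hy' hne
      · rw [Walk.support_cons, Walk.support_cons]
        exact List.cons_subset_cons _ hsub

lemma path_length_eq_dist (hT : T.IsTree) {u v : V} {q : T.Walk u v} (hq : q.IsPath) :
    q.length = T.dist u v := by
  obtain ⟨r, hr⟩ := (hT.isConnected.preconnected u v).exists_walk_length_eq_dist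
  have heq : q = r.bypass := path_eq hT hq r.bypass_isPath
  have h1 : q.length ≤ r.length := heq ▸ r.length_bypass_le
  have h2 := SimpleGraph.dist_le q
  omega
end Aux

/-- In a weighted tree of positive total weight, the set of centroids induces a path:
there is a path of T whose support is exactly the set of centroids. -/
theorem stmt_5 {V : Type*} [Fintype V] (T : SimpleGraph V) (w : V → ℕ) (hT : T.IsTree)
    (hw : 0 < ∑ v, w v) :
    ∃ (c1 c2 : V) (p : T.Walk c1 c2), p.IsPath ∧
      ∀ v, v ∈ p.support ↔ IsCentroid T w v := by
  classical
  have hVne : (Finset.univ : Finset V).Nonempty := by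
    rcases Finset.univ.eq_empty_or_nonempty (α := V) with h | h
    · rw [show (∑ v, w v) = 0 by rw [h, Finset.sum_empty]] at hw; omega
    · exact h
  obtain ⟨c0, _, hc0⟩ := Finset.exists_min_image Finset.univ (hs T w) hVne
  have hc0c : IsCentroid T w c0 := fun u => hc0 u (Finset.mem_univ u)
  set C : Finset V := Finset.univ.filter (fun z => IsCentroid T w z) with hC
  have hc0C : c0 ∈ C := by simp [hC, hc0c]
  obtain ⟨⟨c1, c2⟩, hprC, hmax⟩ := Finset.exists_max_image (C ×ˢ C)
    (fun pr => T.dist pr.1 pr.2) ⟨(c0, c0), Finset.mem_product.mpr ⟨hc0C, hc0C⟩⟩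
  obtain ⟨hc1C, hc2C⟩ := Finset.mem_product.mp hprC
  have hc1 : IsCentroid T w c1 := by simpa [hC] using hc1C
  have hc2 : IsCentroid T w c2 := by simpa [hC] using hc2C
  obtain ⟨W12⟩ := hT.isConnected.preconnected c1 c2
  set p := W12.bypass with hpdef
  have hp : p.IsPath := W12.bypass_isPath
  have hmem_centroid : ∀ y ∈ p.support, IsCentroid T w y :=
    fun y hy => centroid_convex hT hc1 hc2 hp hy
  refine ⟨c1, c2, p, hp, fun v => ⟨fun hv => hmem_centroid v hv, fun hv => ?_⟩⟩
  by_contra hvp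
  obtain ⟨W1v⟩ := hT.isConnected.preconnected c1 v
  set q := W1v.bypass with hqdef
  have hq : q.IsPath := W1v.bypass_isPath
  have hq_cent : ∀ y ∈ q.support, IsCentroid T w y :=
    fun y hy => centroid_convex hT hc1 hv hq hy
  obtain ⟨x, W', hxP, hW'out, hW'sub⟩ :=
    first_meet (Q := fun z => z ∈ p.support) q.reverse p.start_mem_support
  set Wb := W'.bypass with hWbdef
  have hWbp : Wb.IsPath := W'.bypass_isPath
  have hWbsub : Wb.support ⊆ W'.support := W'.support_bypass_subset
  have hWbout : ∀ y ∈ Wb.support, y ≠ x → y ∉ p.support := fun y hy => hW'out y (hWbsub hy)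
  have hWbcent : ∀ y ∈ Wb.support, IsCentroid T w y := by
    intro y hy
    have hyq : y ∈ q.reverse.support := hW'sub (hWbsub hy)
    rw [Walk.support_reverse, List.mem_reverse] at hyq
    exact hq_cent y hyq
  have hvx : v ≠ x := fun h => hvp (h ▸ hxP)
  have hnn : ¬ Wb.Nil := Walk.not_nil_of_ne hvx
  have hnn' : ¬ Wb.reverse.Nil := Walk.not_nil_of_ne (Ne.symm hvx)
  obtain ⟨a, hxa, r, hr⟩ := Walk.not_nil_iff.mp hnn'
  have hrp : (Walk.cons hxa r).IsPath := hr ▸ hWbp.reverse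
  rw [Walk.cons_isPath_iff] at hrp
  have haWb : a ∈ Wb.support := by
    have h' : a ∈ Wb.reverse.support := by
      rw [hr, Walk.support_cons]
      exact List.mem_cons_of_mem _ r.start_mem_support
    rwa [Walk.support_reverse, List.mem_reverse] at h'
  have hax : a ≠ x := fun h => hrp.2 (h ▸ r.start_mem_support)
  have haP : a ∉ p.support := hWbout a haWb hax
  have haC : IsCentroid T w a := hWbcent a haWb
  have hxC : IsCentroid T w x := hmem_centroid x hxP
  have hlen_p : p.length = T.dist c1 c2 := path_length_eq_dist hT hp
  have hWlen : 0 < Wb.length := Walk.not_nil_iff_lt_length.mp hnn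
  -- helper for the endpoint cases
  have hAppendPath : ∀ {s : V} (P0 : T.Walk s x), P0.IsPath → P0.support ⊆ p.support →
      (P0.append Wb.reverse).IsPath := by
    intro s P0 hP0 hP0sub
    apply Walk.IsPath.mk'
    rw [Walk.support_append]
    refine hP0.support_nodup.append ?_ ?_
    · exact (hWbp.reverse.support_nodup).sublist (List.tail_sublist _)
    · intro y hy1 hy2
      have hyW : y ∈ Wb.support := by
        have h' : y ∈ Wb.reverse.support := List.mem_of_mem_tail hy2
        rwa [Walk.support_reverse, List.mem_reverse] at h'
      have hyx : y ≠ x := by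
        intro h
        subst h
        have hnd := hWbp.reverse.support_nodup
        rw [Walk.support_eq_cons Wb.reverse] at hnd
        exact (List.nodup_cons.mp hnd).1 hy2
      exact hWbout y hyW hyx (hP0sub hy1)
  by_cases hxc1 : x = c1
  · subst hxc1
    have hR : (p.reverse.append Wb.reverse).IsPath := by
      refine hAppendPath p.reverse hp.reverse ?_
      intro y hy
      rwa [Walk.support_reverse, List.mem_reverse] at hy
    have hlenR := path_length_eq_dist hT hR
    rw [Walk.length_append, Walk.length_reverse, Walk.length_reverse] at hlenR
    have hdle : T.dist c2 v ≤ T.dist x c2 := by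
      have h' := hmax (c2, v) (Finset.mem_product.mpr ⟨hc2C, by simp [hC, hv]⟩)
      simpa using h'
    omega
  by_cases hxc2 : x = c2
  · subst hxc2
    have hR : (p.append Wb.reverse).IsPath := hAppendPath p hp (fun y hy => hy)
    have hlenR := path_length_eq_dist hT hR
    rw [Walk.length_append, Walk.length_reverse] at hlenR
    have hdle : T.dist c1 v ≤ T.dist c1 x := by
      have h' := hmax (c1, v) (Finset.mem_product.mpr ⟨hc1C, by simp [hC, hv]⟩)
      simpa using h'
    omega
  · -- interior case
    have hp1 : (p.takeUntil x hxP).IsPath := hp.takeUntil hxP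
    have hp2 : (p.dropUntil x hxP).IsPath := hp.dropUntil hxP
    have hnn1 : ¬ (p.takeUntil x hxP).reverse.Nil := Walk.not_nil_of_ne hxc1
    obtain ⟨b1, hxb1, r1, hr1⟩ := Walk.not_nil_iff.mp hnn1
    have hr1p : (Walk.cons hxb1 r1).IsPath := hr1 ▸ hp1.reverse
    rw [Walk.cons_isPath_iff] at hr1p
    have hb1mem : b1 ∈ (p.takeUntil x hxP).support := by
      have h' : b1 ∈ (p.takeUntil x hxP).reverse.support := by
        rw [hr1, Walk.support_cons]
        exact List.mem_cons_of_mem _ r1.start_mem_support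
      rwa [Walk.support_reverse, List.mem_reverse] at h'
    have hnn2 : ¬ (p.dropUntil x hxP).Nil := Walk.not_nil_of_ne hxc2
    obtain ⟨b2, hxb2, r2, hr2⟩ := Walk.not_nil_iff.mp hnn2
    have hb2tail : b2 ∈ (p.dropUntil x hxP).support.tail := by
      rw [hr2, Walk.support_cons, List.tail_cons]
      exact r2.start_mem_support
    have hb1b2 : b1 ≠ b2 := by
      have hnd := hp.support_nodup
      rw [← p.take_spec hxP, Walk.support_append] at hnd
      have hdisj := List.disjoint_of_nodup_append hnd
      intro h
      exact hdisj hb1mem (h ▸ hb2tail)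
    have hb1P : b1 ∈ p.support := p.support_takeUntil_subset hxP hb1mem
    have hb2P : b2 ∈ p.support := p.support_dropUntil_subset hxP (List.mem_of_mem_tail hb2tail)
    have hab1 : a ≠ b1 := fun h => haP (h ▸ hb1P)
    have hab2 : a ≠ b2 := fun h => haP (h ▸ hb2P)
    exact no_three hT hw hxC haC (hmem_centroid b1 hb1P) (hmem_centroid b2 hb2P)
      hab1 hab2 hb1b2 hxa hxb1 hxb2
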